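/- If K ⊆ ℝ² is convex and S ⊆ P is the covered point set of some canonical translate, then the region of positions R(S) = ⋂_{p∈S}(p - K) ∖ ⋃_{p∈P∖S}(p - K) of translates covering exactly S need not be convex, but the full region ⋂_{p∈S}(p - K) of translates covering at least S is convex; moreover if S is maximal (canonical), then R(S) = ⋂_{p∈S}(p - K), and hence R(S) is convex. -/

import Mathlib

abbrev Plane := EuclideanSpace ℝ (Fin 2)

def translateSet (T : Set Plane) (v : Plane) : Set Plane := (· + v) '' T

def coveredSet (P T₀ : Set Plane) (v : Plane) : Set Plane := P ∩ translateSet T₀ v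

def pointInv (K : Set Plane) (p : Plane) : Set Plane := (fun x => p - x) '' K

/-- The region of positions of translates covering exactly the point set `S`. -/
def exactRegion (P K : Set Plane) (S : Set Plane) : Set Plane :=
  (⋂ p ∈ S, pointInv K p) \ ⋃ p ∈ P \ S, pointInv K p

/-!
A translate `K + v` covers `p` exactly when `v ∈ p - K`, so the positions covering at least `S`
form `⋂_{p∈S} (p - K)`, an intersection of reflected copies of the convex set `K`. If such a
position also covered some `q ∈ P \ S`, its covered set would strictly contain `S`,
contradicting maximality; hence nothing is removed from the intersection.
-/

theorem convex_pointInv {K : Set Plane} (hK : Convex ℝ K) (p : Plane) :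
    Convex ℝ (pointInv K p) := by
  simpa [pointInv, sub_eq_add_neg] using hK.affinity p (-1)

theorem mem_pointInv_iff {K : Set Plane} {p v : Plane} :
    v ∈ pointInv K p ↔ p ∈ translateSet K v := by
  simp only [pointInv, translateSet, Set.mem_image]
  refine exists_congr fun k => and_congr_right fun _ => ?_
  constructor <;> rintro rfl <;> abel

theorem subset_coveredSet_iff {P K S : Set Plane} (hSP : S ⊆ P) {v : Plane} :
    S ⊆ coveredSet P K v ↔ v ∈ ⋂ p ∈ S, pointInv K p := by
  simp only [Set.mem_iInter₂, mem_pointInv_iff, coveredSet, Set.subset_inter_iff, hSP, true_and]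
  rfl

theorem exactRegion_eq_biInter_of_maximal {P K S : Set Plane} (hSP : S ⊆ P)
    (hmax : ∀ w : Plane, ¬ S ⊂ coveredSet P K w) :
    exactRegion P K S = ⋂ p ∈ S, pointInv K p := by
  refine sdiff_eq_left.mpr (Set.disjoint_left.mpr fun v hvS hvq => ?_)
  obtain ⟨q, hq, hvq⟩ := Set.mem_iUnion₂.mp hvq
  have hS : S ⊆ coveredSet P K v := (subset_coveredSet_iff hSP).mpr hvS
  exact hmax v ⟨hS, fun h => hq.2 (h ⟨hq.1, mem_pointInv_iff.mp hvq⟩)⟩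

theorem stmt_12_general (K : Set Plane) (hKconv : Convex ℝ K)
    (P : Set Plane) (S : Set Plane)
    (hreal : ∃ v : Plane, S = coveredSet P K v)
    (hmax : ∀ w : Plane, ¬ S ⊂ coveredSet P K w) :
    Convex ℝ (⋂ p ∈ S, pointInv K p) ∧
    exactRegion P K S = ⋂ p ∈ S, pointInv K p ∧
    Convex ℝ (exactRegion P K S) := by
  obtain ⟨v, rfl⟩ := hreal
  have hconv : Convex ℝ (⋂ p ∈ coveredSet P K v, pointInv K p) :=
    convex_iInter₂ fun p _ => convex_pointInv hKconv p
  have hexact := exactRegion_eq_biInter_of_maximal Set.inter_subset_left hmax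
  exact ⟨hconv, hexact, hexact ▸ hconv⟩

/-- for convex `K`, the region `⋂_{p∈S}(p - K)` of positions of translates
covering at least `S` is convex; and if `S` is a canonical (maximal) covered point set
then the region of positions covering exactly `S` equals `⋂_{p∈S}(p - K)`, hence is
convex. -/
theorem stmt_12 (K : Set Plane) (hKc : IsCompact K) (hKconv : Convex ℝ K)
    (P : Set Plane) (hP : P.Finite) (S : Set Plane)
    (hreal : ∃ v : Plane, S = coveredSet P K v)
    (hmax : ∀ w : Plane, ¬ S ⊂ coveredSet P K w) :
    Convex ℝ (⋂ p ∈ S, pointInv K p) ∧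
    exactRegion P K S = ⋂ p ∈ S, pointInv K p ∧
    Convex ℝ (exactRegion P K S) :=
  stmt_12_general K hKconv P S hreal hmax
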